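/- arXiv:2506.00590 — 3 statements merged into one kernel-verified Lean document; each statement's English description precedes it below -/
import Mathlib

section
/- If c is a cost function on S and b(p,q,r) is defined by c(p,r)=c(p,q)+c(q,r)<∞ with p,q,r pairwise distinct, then b(p,q,s) and b(q,r,s) together imply b(p,r,s) and b(p,q,r). -/
open ENNReal

theorem stmt2 {S : Type*} (c : S → S → ℝ≥0∞)
    (hzero : ∀ p q, c p q = 0 ↔ p = q)
    (htri : ∀ p q r, c p r ≤ c p q + c q r)
    (b : S → S → S → Prop)
    (hb : ∀ p q r, b p q r ↔
      (p ≠ q ∧ q ≠ r ∧ p ≠ r ∧ c p r = c p q + c q r ∧ c p r ≠ ⊤))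
    (p q r s : S) (h1 : b p q s) (h2 : b q r s) :
    b p r s ∧ b p q r := by
  rw [hb] at h1 h2
  obtain ⟨hpq, hqs, hps, e1, f1⟩ := h1
  obtain ⟨hqr, hrs, hqs', e2, f2⟩ := h2
  have fpq : c p q ≠ ⊤ := fun h => f1 (by rw [e1, h, top_add])
  have fqs : c q s ≠ ⊤ := fun h => f1 (by rw [e1, h, add_top])
  have fqr : c q r ≠ ⊤ := fun h => f2 (by rw [e2, h, top_add])
  have frs : c r s ≠ ⊤ := fun h => f2 (by rw [e2, h, add_top])
  have eqn : c p s = c p q + c q r + c r s := by rw [e1, e2, add_assoc]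
  -- c p r = c p q + c q r
  have hpr_eq : c p r = c p q + c q r := by
    refine le_antisymm (htri p q r) ?_
    have h3 : c p q + c q r + c r s ≤ c p r + c r s := by
      rw [← eqn]; exact htri p r s
    exact (ENNReal.add_le_add_iff_right frs).mp h3
  have fpr : c p r ≠ ⊤ := by
    rw [hpr_eq]; exact ENNReal.add_ne_top.mpr ⟨fpq, fqr⟩
  have hpr_ne : p ≠ r := by
    intro h
    rw [← h] at eqn
    have heq : c p q + c q p + c p s = 0 + c p s := by rw [zero_add, ← eqn]
    have h0 : c p q + c q p = 0 := WithTop.add_right_cancel f1 heq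
    exact hpq ((hzero p q).mp (add_eq_zero.mp h0).1)
  constructor
  · rw [hb]
    exact ⟨hpr_ne, hrs, hps, by rw [eqn, hpr_eq], f1⟩
  · rw [hb]
    exact ⟨hpq, hqr, hpr_ne, hpr_eq, fpr⟩
end

section
/- A continuous map σ : I → I, where I = [0,1] carries the pretopology induced by the cost function c(s,t)=t−s for s ≤ t and ∞ otherwise (for each fixed r>0, the preclosure Ā_r = {q : ∃p∈A, c(p,q) ≤ r}), is monotonically increasing: s ≤ t implies σ(s) ≤ σ(t). -/
open ENNReal

theorem stmt11 (c : unitInterval → unitInterval → ℝ≥0∞)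
    (hc : ∀ s t : unitInterval,
      c s t = if (s : ℝ) ≤ (t : ℝ) then ENNReal.ofReal ((t : ℝ) - (s : ℝ)) else ⊤)
    (σ : unitInterval → unitInterval)
    (hcont : ∀ r : ℝ≥0∞, 0 < r → ∀ A : Set unitInterval,
      σ '' {q | ∃ p ∈ A, c p q ≤ r} ⊆ {q | ∃ p ∈ σ '' A, c p q ≤ r}) :
    Monotone σ := by
  intro s t hst
  rcases eq_or_lt_of_le hst with h | h
  · exact le_of_eq (congrArg σ h)
  · have hlt : (s : ℝ) < (t : ℝ) := h
    set r : ℝ≥0∞ := ENNReal.ofReal ((t : ℝ) - (s : ℝ)) with hr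
    have hrpos : 0 < r := by
      rw [hr]; exact ENNReal.ofReal_pos.mpr (by linarith)
    have ht : t ∈ {q | ∃ p ∈ ({s} : Set unitInterval), c p q ≤ r} := by
      refine ⟨s, rfl, ?_⟩
      rw [hc]
      simp [hlt.le, hr]
    have := hcont r hrpos {s} ⟨t, ht, rfl⟩
    obtain ⟨p, hp, hcp⟩ := this
    obtain ⟨p', hp', rfl⟩ := hp
    rw [Set.mem_singleton_iff] at hp'
    rw [hp'] at hcp
    rw [hc] at hcp
    by_contra hle
    have : ¬ ((σ s : ℝ) ≤ (σ t : ℝ)) := by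
      intro hh; exact hle (Subtype.coe_le_coe.mp hh)
    rw [if_neg this] at hcp
    exact (ENNReal.ofReal_lt_top).not_ge (le_trans le_top hcp)
end

section
/- For I = [0,1] with the non-symmetric cost c₁(p,q) = q−p if p ≤ q and c₁(p,q) = 2(p−q) if p ≥ q, and for fixed α ∈ [0,1], the pair of functions f(p) = α−p for p ≤ α, f(p) = 2(p−α) for p ≥ α, and g(q) = 2(α−q) for q ≤ α, g(q) = q−α for q ≥ α, satisfies the tight-span equation f(p) = sup_{q ∈ I} ( c₁(p,q) − g(q) ) for every p ∈ I. -/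
theorem stmt19 (α : ℝ) (hα : α ∈ Set.Icc (0 : ℝ) 1)
    (c₁ : ℝ → ℝ → ℝ)
    (hc : ∀ p q, c₁ p q = if p ≤ q then q - p else 2 * (p - q))
    (f g : ℝ → ℝ)
    (hf : ∀ p, f p = if p ≤ α then α - p else 2 * (p - α))
    (hg : ∀ q, g q = if q ≤ α then 2 * (α - q) else q - α) :
    ∀ p ∈ Set.Icc (0 : ℝ) 1,
      f p = sSup {x : ℝ | ∃ q ∈ Set.Icc (0 : ℝ) 1, x = c₁ p q - g q} := by
  intro p hp
  obtain ⟨hα0, hα1⟩ := hα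
  obtain ⟨hp0, hp1⟩ := hp
  have hub : ∀ x ∈ {x : ℝ | ∃ q ∈ Set.Icc (0 : ℝ) 1, x = c₁ p q - g q}, x ≤ f p := by
    rintro x ⟨q, ⟨hq0, hq1⟩, rfl⟩
    rw [hc, hg, hf]
    split_ifs <;> linarith
  have hmem : f p ∈ {x : ℝ | ∃ q ∈ Set.Icc (0 : ℝ) 1, x = c₁ p q - g q} := by
    refine ⟨α, ⟨hα0, hα1⟩, ?_⟩
    rw [hc, hg, hf]
    split_ifs <;> linarith
  exact le_antisymm (le_csSup ⟨f p, hub⟩ hmem) (csSup_le ⟨f p, hmem⟩ hub)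
end
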